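/- arXiv:2112.10385 — 3 statements merged into one kernel-verified Lean document; each statement's English description precedes it below -/
import Mathlib

section
/- Let $\mathbf{k}$ be a field of characteristic $p > 0$ and $\gamma < 0$. Then the Artin–Schreier polynomial $x^p - x - T^{\gamma}$ has no root in the Novikov field $\Lambda^{\min}$; consequently $\Lambda^{\min}$ is not algebraically closed. -/
/-!
If `x ^ p - x = T ^ γ` with `γ < 0`, comparing lowest-order terms forces `x = T ^ (γ / p) + ⋯`
with all other terms of higher order, and then `x - T ^ (γ / p)` solves the same equation with
`γ / p` in place of `γ`. Iterating, every `γ / p ^ n` with `n ≥ 1` lies in the support of `x`,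
so the support of `x` has infinitely many points in `(-∞, 0]`.
-/

namespace HahnSeries

instance instCharP {Γ R : Type*} [AddCommMonoid Γ] [PartialOrder Γ] [IsOrderedCancelAddMonoid Γ]
    [Semiring R] (p : ℕ) [CharP R p] : CharP (HahnSeries Γ R) p :=
  charP_of_injective_ringHom C_injective p

theorem support_sub_single_order_leadingCoeff {Γ R : Type*} [PartialOrder Γ] [Zero Γ]
    [AddGroup R] (x : HahnSeries Γ R) :
    (x - single x.order x.leadingCoeff).support = x.support \ {x.order} := by
  ext g
  by_cases hg : g = x.order
  · simp [hg, leadingCoeff_eq]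
  · simp [hg, coeff_single_of_ne hg]

section Pow

variable {Γ R : Type*} [AddCommMonoid Γ] [LinearOrder Γ] [IsOrderedCancelAddMonoid Γ]
  [Semiring R] [NoZeroDivisors R]

theorem leadingCoeff_pow (x : HahnSeries Γ R) (n : ℕ) :
    (x ^ n).leadingCoeff = x.leadingCoeff ^ n := by
  induction n with
  | zero => simp
  | succ n ih => rw [pow_succ, leadingCoeff_mul, ih, pow_succ]

theorem coeff_pow_nsmul_order (x : HahnSeries Γ R) (n : ℕ) :
    (x ^ n).coeff (n • x.order) = x.leadingCoeff ^ n := by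
  rw [← order_pow, ← leadingCoeff_eq, leadingCoeff_pow]

end Pow

section ArtinSchreier

variable {Γ R : Type*} [AddCommGroup Γ] [LinearOrder Γ] [IsOrderedAddMonoid Γ]
  [CommRing R] [IsDomain R] {p : ℕ} [Fact p.Prime] [CharP R p]

theorem nsmul_order_and_leadingCoeff_of_pow_sub_self_eq_single {γ : Γ} (hγ : γ < 0)
    {x : HahnSeries Γ R} (h : x ^ p - x = single γ 1) :
    p • x.order = γ ∧ x.leadingCoeff = 1 := by
  have hp : p ≠ 0 := (Fact.out : p.Prime).ne_zero
  have hx : x ≠ 0 := by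
    rintro rfl
    simpa [zero_pow hp] using congrArg (coeff · γ) h
  have hcoeff (g : Γ) : (x ^ p).coeff g - x.coeff g = (single γ (1 : R)).coeff g := by
    rw [← coeff_sub, h]
  have hneg : x.order < 0 := by
    by_contra! h0
    have hγx : γ < x.order := hγ.trans_le h0
    have hγxp : γ < (x ^ p).order := hγ.trans_le (by rw [order_pow]; exact nsmul_nonneg h0 p)
    simpa [coeff_eq_zero_of_lt_order hγx, coeff_eq_zero_of_lt_order hγxp] using hcoeff γ
  -- The coefficient of `T ^ (p • x.order)` comes from `x ^ p` alone.
  have hlt : p • x.order < x.order := by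
    simpa using neg_lt_neg (nsmul_lt_nsmul_left (neg_pos.2 hneg) (Fact.out : p.Prime).one_lt)
  have key := hcoeff (p • x.order)
  rw [coeff_eq_zero_of_lt_order hlt, sub_zero, coeff_pow_nsmul_order] at key
  have hγ' : p • x.order = γ := by
    by_contra hne
    rw [coeff_single_of_ne hne] at key
    exact leadingCoeff_ne_zero.2 hx ((pow_eq_zero_iff hp).1 key)
  rw [hγ', coeff_single_same] at key
  refine ⟨hγ', sub_eq_zero.1 ((pow_eq_zero_iff hp).1 ?_)⟩
  rw [sub_pow_char, key, one_pow, sub_self]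

theorem pow_sub_self_eq_single_order {γ : Γ} (hγ : γ < 0) {x : HahnSeries Γ R}
    (h : x ^ p - x = single γ 1) :
    (x - single x.order 1) ^ p - (x - single x.order 1) = single x.order 1 := by
  obtain ⟨hord, -⟩ := nsmul_order_and_leadingCoeff_of_pow_sub_self_eq_single hγ h
  rw [sub_pow_char, single_pow, one_pow, hord, sub_sub_sub_comm, h, sub_sub_cancel]

end ArtinSchreier

section Real

variable {k : Type*} [Field k] {p : ℕ} [Fact p.Prime] [CharP k p]

theorem order_eq_div_of_pow_sub_self_eq_single {γ : ℝ} (hγ : γ < 0) {x : HahnSeries ℝ k}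
    (h : x ^ p - x = single γ 1) : x.order = γ / p := by
  have hp : (p : ℝ) ≠ 0 := by exact_mod_cast (Fact.out : p.Prime).ne_zero
  rw [eq_div_iff hp, mul_comm, ← nsmul_eq_mul,
    (nsmul_order_and_leadingCoeff_of_pow_sub_self_eq_single hγ h).1]

theorem div_pow_succ_mem_support_of_pow_sub_self_eq_single (n : ℕ) {γ : ℝ} (hγ : γ < 0)
    {x : HahnSeries ℝ k} (h : x ^ p - x = single γ 1) : γ / p ^ (n + 1) ∈ x.support := by
  have hlead := (nsmul_order_and_leadingCoeff_of_pow_sub_self_eq_single hγ h).2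
  have hx := order_eq_div_of_pow_sub_self_eq_single hγ h
  cases n with
  | zero =>
    rw [zero_add, pow_one, ← hx, mem_support, ← leadingCoeff_eq, hlead]
    exact one_ne_zero
  | succ n =>
    have hp : (0 : ℝ) < p := by exact_mod_cast (Fact.out : p.Prime).pos
    have hmem := div_pow_succ_mem_support_of_pow_sub_self_eq_single n
      (hx ▸ div_neg_of_neg_of_pos hγ hp) (pow_sub_self_eq_single_order hγ h)
    rw [← hlead, support_sub_single_order_leadingCoeff, hx, div_div, ← pow_succ'] at hmem
    exact hmem.1

end Real

end HahnSeries

/-- Over a field `k` of characteristic `p > 0` and for `γ < 0`, the Artin–Schreier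
polynomial `x^p - x - T^γ` has no root in the Novikov field `Λ^min`, viewed as the
set of Hahn series whose support has finite intersection with every `(-∞, c]`. -/
theorem stmt4 {k : Type*} [Field k] (p : ℕ) [Fact p.Prime] [CharP k p]
    (γ : ℝ) (hγ : γ < 0) :
    ¬ ∃ x : HahnSeries ℝ k,
        (∀ c : ℝ, (x.support ∩ Set.Iic c).Finite) ∧
        x ^ p - x = HahnSeries.single γ (1 : k) := by
  rintro ⟨x, hfin, h⟩
  have hp : (1 : ℝ) < p := by exact_mod_cast (Fact.out : p.Prime).one_lt
  have hinj : Function.Injective fun n : ℕ ↦ γ / (p : ℝ) ^ (n + 1) := by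
    intro a b hab
    have := mul_left_cancel₀ hγ.ne (by simpa only [div_eq_mul_inv] using hab)
    simpa using (pow_right_injective₀ (by linarith) hp.ne').eq_iff.1 (inv_inj.1 this)
  refine (hfin 0).not_infinite ((Set.infinite_range_of_injective hinj).mono ?_)
  rintro _ ⟨n, rfl⟩
  exact ⟨HahnSeries.div_pow_succ_mem_support_of_pow_sub_self_eq_single n hγ h,
    (div_neg_of_neg_of_pos hγ (by positivity)).le⟩
end

section
/- Let $K$ be a field of characteristic $p > 0$ and $a \in K$. If the polynomial $f_a(x) = x^p - x - a \in K[x]$ has a root $b \in K$, then its roots are exactly $b, b+1, \ldots, b+(p-1)$, all of which lie in $K$. If $f_a$ has no root in $K$, then $f_a$ is irreducible over $K$ and $K[x]/(f_a)$ is a Galois extension of $K$ of degree $p$. -/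
/-!
The Artin–Schreier map `℘ x = x ^ p - x` is additive with kernel the prime field, so once
`x ^ p - x - a` has a root `β` somewhere, its roots are exactly `β + n` for `n < p` and it factors as
`∏ (X - (β + n))`. A monic factor of degree `d` with `0 < d < p` would have `-nextCoeff` equal to a
sum of `d` roots, whose `℘`-image is `d • a` by additivity; dividing by `d` gives a root in `K`.
Without roots in `K` the polynomial is therefore irreducible, and `K[x]/(f)`, containing one root,
contains all of them: it is the splitting field of the separable polynomial `f` (`f' = -1`).
-/

open Polynomial

section ArtinSchreierMap

variable (R : Type*) [CommRing R] (p : ℕ) [ExpChar R p]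

def artinSchreierMap : R →+ R :=
  (frobenius R p).toAddMonoidHom - AddMonoidHom.id R

variable {R p}

@[simp]
lemma artinSchreierMap_apply (x : R) : artinSchreierMap R p x = x ^ p - x := rfl

lemma natCast_pow_of_expChar (n : ℕ) : (n : R) ^ p = n := by
  simpa only [frobenius_def] using map_natCast (frobenius R p) n

end ArtinSchreierMap

section Polynomial

variable {R : Type*} [CommRing R] {p : ℕ}

lemma natDegree_X_pow_sub_X_sub_C [Nontrivial R] (hp : 1 < p) (a : R) :
    (X ^ p - X - C a : R[X]).natDegree = p := by
  rw [sub_sub, natDegree_sub_eq_left_of_natDegree_lt] <;> simp [hp]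

lemma monic_X_pow_sub_X_sub_C [Nontrivial R] (hp : 1 < p) (a : R) :
    (X ^ p - X - C a : R[X]).Monic := by
  rw [sub_sub]
  exact monic_X_pow_sub (by rw [degree_X_add_C]; exact_mod_cast hp)

lemma separable_X_pow_sub_X_sub_C [CharP R p] (a : R) : (X ^ p - X - C a : R[X]).Separable := by
  have : derivative (X ^ p - X - C a : R[X]) = -1 := by simp [derivative_X_pow]
  exact ⟨0, -1, by rw [this]; ring⟩

theorem X_pow_sub_X_sub_C_eq_prod [IsDomain R] [Fact p.Prime] [CharP R p] (β : R) :
    (X ^ p - X - C (β ^ p - β) : R[X]) = ∏ n ∈ Finset.range p, (X - C (β + n)) := by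
  have hp : 1 < p := (Fact.out : p.Prime).one_lt
  have hf := monic_X_pow_sub_X_sub_C hp (β ^ p - β)
  refine eq_of_monic_of_dvd_of_natDegree_le
    (monic_prod_of_monic _ _ fun n _ => monic_X_sub_C _) hf ?_ ?_
  · have hnodup : ((Finset.range p).val.map fun n : ℕ => β + n).Nodup := by
      refine (Finset.range p).nodup.map_on fun m hm n hn hmn => ?_
      exact CharP.natCast_injOn_Iio R p (by simpa using hm) (by simpa using hn) (by simpa using hmn)
    have hroots : ∀ n : ℕ, (β + n) ∈ (X ^ p - X - C (β ^ p - β) : R[X]).roots := fun n => by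
      rw [mem_roots hf.ne_zero]
      simp [add_pow_char, natCast_pow_of_expChar]
    have := (Multiset.prod_X_sub_C_dvd_iff_le_roots hf.ne_zero _).2
      ((Multiset.le_iff_subset hnodup).2 fun r hr => by
        obtain ⟨n, -, rfl⟩ := Multiset.mem_map.1 hr
        exact hroots n)
    simpa [Finset.prod_eq_multiset_prod, Multiset.map_map, Function.comp_def] using this
  · rw [natDegree_prod_of_monic _ _ fun n _ => monic_X_sub_C _, natDegree_X_pow_sub_X_sub_C hp]
    simp only [natDegree_X_sub_C, Finset.sum_const, Finset.card_range, smul_eq_mul, mul_one, le_rfl]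

theorem pow_sub_self_eq_pow_sub_self_iff [IsDomain R] [Fact p.Prime] [CharP R p] (b z : R) :
    z ^ p - z = b ^ p - b ↔ ∃ n < p, z = b + n := by
  have := congrArg (eval z) (X_pow_sub_X_sub_C_eq_prod (p := p) b)
  simp only [eval_sub, eval_pow, eval_X, eval_C, eval_prod] at this
  rw [← sub_eq_zero, this, Finset.prod_eq_zero_iff]
  simp only [Finset.mem_range, sub_eq_zero]

end Polynomial

section Irreducible

variable {K : Type*} [Field K] {p : ℕ} [Fact p.Prime] [CharP K p] {a : K}

theorem artinSchreierMap_neg_nextCoeff_of_dvd {q : K[X]} (hq : q.Monic)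
    (hdvd : q ∣ X ^ p - X - C a) : artinSchreierMap K p (-q.nextCoeff) = q.natDegree • a := by
  let φ := algebraMap K (AlgebraicClosure K)
  have hp : 1 < p := (Fact.out : p.Prime).one_lt
  have hf0 : (X ^ p - X - C a : K[X]).map φ ≠ 0 :=
    (monic_X_pow_sub_X_sub_C hp a).map φ |>.ne_zero
  have hQ : (q.map φ).Splits := IsAlgClosed.splits _
  have hroots : ∀ r ∈ (q.map φ).roots, artinSchreierMap _ p r = φ a := fun r hr => by
    have := (mem_roots hf0).1 (Multiset.mem_of_le (roots.le_of_dvd hf0 (map_dvd φ hdvd)) hr)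
    simpa [sub_eq_zero] using this
  apply φ.injective
  calc φ (artinSchreierMap K p (-q.nextCoeff))
      = artinSchreierMap _ p (q.map φ).roots.sum := by
        rw [← neg_neg (q.map φ).roots.sum, ← hQ.nextCoeff_eq_neg_sum_roots_of_monic (hq.map φ),
          nextCoeff_map φ.injective]
        simp
    _ = ((q.map φ).roots.map fun _ => φ a).sum := by
        rw [map_multiset_sum, Multiset.map_congr rfl hroots]
    _ = φ (q.natDegree • a) := by
        rw [Multiset.map_const', Multiset.sum_replicate, splits_iff_card_roots.1 hQ,
          natDegree_map, map_nsmul]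

theorem exists_pow_sub_self_eq_of_monic_dvd {q : K[X]} (hq : q.Monic)
    (hdvd : q ∣ X ^ p - X - C a) (hd : (q.natDegree : K) ≠ 0) : ∃ b : K, b ^ p - b = a := by
  -- the witness is the mean of the roots of `q`
  refine ⟨-q.nextCoeff / q.natDegree, mul_left_cancel₀ hd ?_⟩
  have := artinSchreierMap_neg_nextCoeff_of_dvd hq hdvd
  rw [← mul_div_cancel₀ (-q.nextCoeff) hd, ← nsmul_eq_mul, map_nsmul, nsmul_eq_mul,
    nsmul_eq_mul] at this
  simpa using this

theorem irreducible_X_pow_sub_X_sub_C (h : ¬ ∃ b : K, b ^ p - b = a) :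
    Irreducible (X ^ p - X - C a : K[X]) := by
  have hp : 1 < p := (Fact.out : p.Prime).one_lt
  have hf := monic_X_pow_sub_X_sub_C hp a
  refine hf.irreducible_iff_natDegree.2 ⟨fun h1 => ?_, fun g k hg hk hgk => ?_⟩
  · have := congrArg natDegree h1
    rw [natDegree_X_pow_sub_X_sub_C hp, natDegree_one] at this
    omega
  · by_contra! hgk0
    have hsum : g.natDegree + k.natDegree = p := by
      rw [← natDegree_mul hg.ne_zero hk.ne_zero, hgk, natDegree_X_pow_sub_X_sub_C hp]
    refine h (exists_pow_sub_self_eq_of_monic_dvd hg ⟨k, hgk.symm⟩ ?_)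
    rw [Ne, CharP.cast_eq_zero_iff K p]
    exact fun hpd => by have := Nat.le_of_dvd (Nat.pos_of_ne_zero hgk0.1) hpd; omega

end Irreducible

section AdjoinRoot

variable {K : Type*} [Field K] {p : ℕ} [Fact p.Prime] {a : K}
  [Fact (Irreducible (X ^ p - X - C a : K[X]))]

instance isSplittingField_adjoinRoot_X_pow_sub_X_sub_C [CharP K p] :
    IsSplittingField K (AdjoinRoot (X ^ p - X - C a : K[X])) (X ^ p - X - C a) := by
  set f : K[X] := X ^ p - X - C a
  have : CharP (AdjoinRoot f) p := charP_of_injective_algebraMap (algebraMap K _).injective p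
  have hroot : algebraMap K (AdjoinRoot f) a = AdjoinRoot.root f ^ p - AdjoinRoot.root f := by
    have := AdjoinRoot.eval₂_root f
    simp only [f, eval₂_sub, eval₂_pow, eval₂_X, eval₂_C, sub_eq_zero] at this
    rw [AdjoinRoot.algebraMap_eq, ← this]
  constructor
  · rw [Polynomial.map_sub, Polynomial.map_sub, Polynomial.map_pow, map_X, map_C, hroot,
      X_pow_sub_X_sub_C_eq_prod]
    exact Splits.prod fun n _ => Splits.X_sub_C _
  · rw [eq_top_iff, ← AdjoinRoot.adjoinRoot_eq_top, Algebra.adjoin_le_iff,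
      Set.singleton_subset_iff]
    refine Algebra.subset_adjoin ?_
    rw [mem_rootSet_of_ne (Fact.out : Irreducible f).ne_zero, aeval_def, AdjoinRoot.algebraMap_eq,
      AdjoinRoot.eval₂_root]

theorem isGalois_adjoinRoot_X_pow_sub_X_sub_C [CharP K p] :
    IsGalois K (AdjoinRoot (X ^ p - X - C a : K[X])) :=
  IsGalois.of_separable_splitting_field (separable_X_pow_sub_X_sub_C a)

theorem finrank_adjoinRoot_X_pow_sub_X_sub_C :
    Module.finrank K (AdjoinRoot (X ^ p - X - C a : K[X])) = p := by
  rw [(AdjoinRoot.powerBasis (Fact.out : Irreducible (X ^ p - X - C a : K[X])).ne_zero).finrank,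
    AdjoinRoot.powerBasis_dim, natDegree_X_pow_sub_X_sub_C (Fact.out : p.Prime).one_lt]

end AdjoinRoot

/-- The Artin–Schreier dichotomy: over a field `K` of characteristic `p > 0`, either
`x^p - x - a` has a root `b ∈ K`, in which case its roots are exactly
`b, b+1, …, b+(p-1)`; or it has no root in `K`, in which case it is irreducible and
`K[x]/(x^p - x - a)` is a Galois extension of `K` of degree `p`. -/
theorem stmt5 {K : Type*} [Field K] (p : ℕ) [Fact p.Prime] [CharP K p] (a : K) :
    (∀ b : K, b ^ p - b = a →
      ∀ z : K, z ^ p - z = a ↔ ∃ n : ℕ, n < p ∧ z = b + (n : K)) ∧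
    ((¬ ∃ b : K, b ^ p - b = a) →
      Irreducible (X ^ p - X - C a : K[X]) ∧
      ∀ [Fact (Irreducible (X ^ p - X - C a : K[X]))],
        IsGalois K (AdjoinRoot (X ^ p - X - C a : K[X])) ∧
        Module.finrank K (AdjoinRoot (X ^ p - X - C a : K[X])) = p) := by
  refine ⟨?_, fun h => ⟨irreducible_X_pow_sub_X_sub_C h,
    ⟨isGalois_adjoinRoot_X_pow_sub_X_sub_C, finrank_adjoinRoot_X_pow_sub_X_sub_C⟩⟩⟩
  rintro b rfl z
  exact pow_sub_self_eq_pow_sub_self_iff b z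
end

section
/- Let $G$ be a group equipped with a norm $|\cdot|: G \to [0,\infty)$ satisfying $|1| = 0$ and $|xy| \leq |x| + |y|$, $|x^{-1}| = |x|$, let $\Lambda$ be a complete nonarchimedean valued Novikov field (containing elements $T^\gamma$ of every real valuation $\gamma$), let $\delta > 0$, and let $\Lambda[G]^\delta$ be the completion of the group algebra consisting of sums $\sum_{i=1}^\infty c_i x_i$ ($c_i \in \Lambda$, $x_i \in G$) with $\mathbf{v}(c_i) - \delta |x_i| \to \infty$. Then a one-dimensional representation $\rho: G \to \Lambda^{\times}$ extends continuously to a ring homomorphism $\Lambda[G]^\delta \to \Lambda$ if and only if $|\mathbf{v}(\rho(x))| \leq \delta\,|x|$ for every $x \in G$. -/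
/-!
If `|v(ρ x)| ≤ δ N(x)`, then `v(cᵢ ρ(xᵢ)) ≥ v(cᵢ) - δ N(xᵢ) → ∞`, and in a complete
nonarchimedean field a series whose terms tend to zero converges. Conversely, for `y ∈ G` and
`γ > δ N(y)` the series `∑ⱼ T^{jγ} yʲ` lies in `Λ[G]^δ`, so its image `∑ⱼ (T^γ ρ(y))ʲ` converges;
a convergent geometric series has ratio of norm `< 1`, i.e. `log ‖ρ y‖ < γ`. Letting `γ ↓ δ N(y)`
and applying the same bound to `y⁻¹` gives `|v(ρ y)| ≤ δ N(y)`.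
-/

open Filter Real

lemma le_nat_mul_of_subadditive {M : Type*} [Monoid M] (N : M → ℝ) (hN1 : N 1 = 0)
    (hNmul : ∀ x y : M, N (x * y) ≤ N x + N y) (y : M) (j : ℕ) : N (y ^ j) ≤ j * N y := by
  induction j with
  | zero => simp [hN1]
  | succ j ih =>
    calc N (y ^ (j + 1)) ≤ N (y ^ j) + N y := pow_succ y j ▸ hNmul _ _
      _ ≤ (j + 1 : ℕ) * N y := by push_cast; linarith

lemma summable_mul_of_norm_le_exp {R : Type*} [NormedRing R] [IsUltrametricDist R]
    [CompleteSpace R] {c r : ℕ → R} {s : ℕ → ℝ} (hr : ∀ i, ‖r i‖ ≤ exp (s i))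
    (h : Tendsto (fun i => -log ‖c i‖ - s i) atTop atTop) :
    Summable fun i => c i * r i := by
  apply NonarchimedeanAddGroup.summable_of_tendsto_cofinite_zero
  rw [Nat.cofinite_eq_atTop]
  have hbound : ∀ i, ‖c i * r i‖ ≤ exp (-(-log ‖c i‖ - s i)) := fun i =>
    calc ‖c i * r i‖ ≤ ‖c i‖ * ‖r i‖ := norm_mul_le _ _
      _ ≤ exp (log ‖c i‖) * exp (s i) :=
        mul_le_mul (le_exp_log _) (hr i) (norm_nonneg _) (exp_nonneg _)
      _ = exp (-(-log ‖c i‖ - s i)) := by rw [← exp_add]; ring_nf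
  exact squeeze_zero_norm hbound
    (tendsto_exp_atBot.comp (tendsto_neg_atTop_atBot.comp h))

lemma norm_lt_exp_of_summable_mul_pow {Λ : Type*} [NormedDivisionRing Λ] {t : ℕ → Λ} {γ : ℝ}
    (ht : ∀ j : ℕ, ‖t j‖ = exp (-(j * γ))) (a : Λ) (h : Summable fun j => t j * a ^ j) :
    ‖a‖ < exp γ := by
  have hnorm : (fun j : ℕ => ‖t j * a ^ j‖) = fun j => (exp (-γ) * ‖a‖) ^ j := by
    ext j
    rw [norm_mul, norm_pow, ht, mul_pow, ← exp_nat_mul, neg_mul_eq_mul_neg]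
  have hgeom := h.tendsto_atTop_zero.norm
  rw [norm_zero, hnorm, tendsto_pow_atTop_nhds_zero_iff,
    abs_of_nonneg (by positivity), exp_neg, inv_mul_lt_iff₀ (exp_pos γ), mul_one] at hgeom
  exact hgeom

lemma log_norm_le_of_forall_summable {Λ G : Type*} [NormedField Λ] [Monoid G]
    (N : G → ℝ) (hN1 : N 1 = 0) (hNmul : ∀ x y : G, N (x * y) ≤ N x + N y)
    (T : ℝ → Λˣ) (hT : ∀ γ : ℝ, ‖(T γ : Λ)‖ = exp (-γ))
    {δ : ℝ} (hδ : 0 ≤ δ) (ρ : G →* Λˣ)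
    (H : ∀ (c : ℕ → Λ) (x : ℕ → G), (∀ i, c i ≠ 0) →
        Tendsto (fun i => -log ‖c i‖ - δ * N (x i)) atTop atTop →
        Summable fun i => c i * (ρ (x i) : Λ))
    (y : G) : log ‖(ρ y : Λ)‖ ≤ δ * N y := by
  refine le_of_forall_gt fun γ hγ => ?_
  have hgrowth : Tendsto (fun j : ℕ => -log ‖(T (j * γ) : Λ)‖ - δ * N (y ^ j)) atTop atTop := by
    refine tendsto_atTop_mono (fun j => ?_)
      (tendsto_natCast_atTop_atTop.atTop_mul_const (sub_pos.mpr hγ))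
    have := mul_le_mul_of_nonneg_left (le_nat_mul_of_subadditive N hN1 hNmul y j) hδ
    rw [hT, log_exp]
    linarith
  have hsum := H _ _ (fun _ => Units.ne_zero _) hgrowth
  simp only [map_pow, Units.val_pow_eq_pow_val] at hsum
  rw [log_lt_iff_lt_exp (norm_pos_iff.mpr (Units.ne_zero _))]
  exact norm_lt_exp_of_summable_mul_pow (fun j => hT _) _ hsum

lemma abs_log_norm_le_of_log_norm_le {Λ G : Type*} [NormedDivisionRing Λ] [Group G]
    (N : G → ℝ) (hNinv : ∀ x : G, N x⁻¹ = N x) (δ : ℝ) (ρ : G →* Λˣ)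
    (h : ∀ y, log ‖(ρ y : Λ)‖ ≤ δ * N y) (x : G) : |(-log ‖(ρ x : Λ)‖)| ≤ δ * N x := by
  have hinv := h x⁻¹
  rw [map_inv, Units.val_inv_eq_inv_val, norm_inv, log_inv, hNinv] at hinv
  rw [abs_le]
  constructor <;> linarith [h x]

theorem stmt8_general {Λ G : Type*} [NormedField Λ] [IsUltrametricDist Λ] [CompleteSpace Λ]
    [Group G]
    (N : G → ℝ) (hN1 : N 1 = 0)
    (hNmul : ∀ x y : G, N (x * y) ≤ N x + N y) (hNinv : ∀ x : G, N x⁻¹ = N x)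
    (T : ℝ → Λˣ) (hT : ∀ γ : ℝ, ‖(T γ : Λ)‖ = Real.exp (-γ))
    (δ : ℝ) (hδ : 0 < δ) (ρ : G →* Λˣ) :
    (∀ (c : ℕ → Λ) (x : ℕ → G), (∀ i, c i ≠ 0) →
        Filter.Tendsto (fun i => -Real.log ‖c i‖ - δ * N (x i))
          Filter.atTop Filter.atTop →
        Summable fun i => c i * (ρ (x i) : Λ)) ↔
    ∀ x : G, |(-Real.log ‖(ρ x : Λ)‖)| ≤ δ * N x := by
  constructor
  · intro H
    exact abs_log_norm_le_of_log_norm_le N hNinv δ ρ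
      (log_norm_le_of_forall_summable N hN1 hNmul T hT hδ.le ρ H)
  · intro H c x _ hgrowth
    have hρ : ∀ i, ‖(ρ (x i) : Λ)‖ ≤ exp (δ * N (x i)) := fun i =>
      (log_le_iff_le_exp (norm_pos_iff.mpr (Units.ne_zero _))).mp
        (by linarith [(abs_le.mp (H (x i))).1])
    exact summable_mul_of_norm_le_exp hρ hgrowth

/-- Let `G` be a group with a norm `N`, `Λ` a complete nonarchimedean valued Novikov
field (valuation `v a = -log ‖a‖`, containing elements `T^γ` of every valuation
`γ ∈ ℝ`), and `δ > 0`. A one-dimensional representation `ρ : G → Λˣ` extends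
continuously to the completed group ring `Λ[G]^δ` — i.e. all series `∑ cᵢ ρ(xᵢ)`
with `v(cᵢ) - δ N(xᵢ) → ∞` converge — if and only if `|v(ρ x)| ≤ δ N(x)` for every
`x ∈ G`. -/
theorem stmt8 {Λ G : Type*} [NormedField Λ] [IsUltrametricDist Λ] [CompleteSpace Λ]
    [Group G]
    (N : G → ℝ) (hN0 : ∀ x, 0 ≤ N x) (hN1 : N 1 = 0)
    (hNmul : ∀ x y : G, N (x * y) ≤ N x + N y) (hNinv : ∀ x : G, N x⁻¹ = N x)
    (T : ℝ → Λˣ) (hT : ∀ γ : ℝ, ‖(T γ : Λ)‖ = Real.exp (-γ))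
    (δ : ℝ) (hδ : 0 < δ) (ρ : G →* Λˣ) :
    (∀ (c : ℕ → Λ) (x : ℕ → G), (∀ i, c i ≠ 0) →
        Filter.Tendsto (fun i => -Real.log ‖c i‖ - δ * N (x i))
          Filter.atTop Filter.atTop →
        Summable fun i => c i * (ρ (x i) : Λ)) ↔
    ∀ x : G, |(-Real.log ‖(ρ x : Λ)‖)| ≤ δ * N x :=
  stmt8_general N hN1 hNmul hNinv T hT δ hδ ρ
end
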